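/- Let (V,ρ) be an anchored A-module. In the category of modules over A ⊗_k A (equivalently, A-bimodules on which k acts symmetrically), the commutative square consisting of: the inclusion Ω¹_{A/k} = I/I² → A^{(1)} = (A⊗_k A)/I²; the A-linear map ρ^* : Ω¹_{A/k} → V^* determined by d(a) ↦ (v ↦ ρ(v)(a)); the map V^* → Σ_V^*, θ ↦ (θ, 0); and the map A^{(1)} → Σ_V^* induced by a₁⊗a₂ ↦ (a₂•ρ^*(d a₁), a₁a₂), is a pushout square. (Here V^* ⊆ Σ_V^* carries the symmetric bimodule structure a·θ = θ·a = a•θ, and Ω¹ and A^{(1)} carry their canonical bimodule structures.) -/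
import Mathlib


open TensorProduct

noncomputable section
set_option synthInstance.maxHeartbeats 1000000
set_option maxHeartbeats 1000000
set_option linter.unusedSectionVars false

universe u

section Defs

variable (k A : Type*) [CommRing k] [CommRing A] [Algebra k A]

/-- `I` = kernel of the multiplication map `A ⊗_k A → A`. -/
def mulIdeal : Ideal (A ⊗[k] A) :=
  RingHom.ker (Algebra.TensorProduct.lmul' k (S := A)).toRingHom

/-- `A^{(1)} = (A ⊗_k A)/I²`. -/
abbrev AOne := (A ⊗[k] A) ⧸ (mulIdeal k A ^ 2)

/-- The module of Kähler differentials `Ω¹_{A/k} = I/I²`, realized as the image of `I`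
inside `A^{(1)} = (A ⊗_k A)/I²`, viewed as an `A`-module. -/
abbrev OmegaM : Submodule A (AOne k A) :=
  Submodule.restrictScalars A
    ((mulIdeal k A).map (Ideal.Quotient.mk (mulIdeal k A ^ 2)))

lemma mem_mulIdeal (a : A) : a ⊗ₜ[k] (1 : A) - (1 : A) ⊗ₜ[k] a ∈ mulIdeal k A := by
  rw [mulIdeal, RingHom.mem_ker]
  simp

/-- The universal derivation `d : A → Ω¹_{A/k}`, `d(a) =` class of `a⊗1 − 1⊗a`. -/
def ddMap (a : A) : OmegaM k A :=
  ⟨Ideal.Quotient.mk (mulIdeal k A ^ 2) (a ⊗ₜ[k] (1 : A) - (1 : A) ⊗ₜ[k] a),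
    (Submodule.restrictScalars_mem _ _ _).2 (Ideal.mem_map_of_mem _ (mem_mulIdeal k A a))⟩

variable {V : Type*} [AddCommGroup V] [Module A V]

/-- For an anchored `A`-module `(V, ρ)` and `a ∈ A`, the `A`-linear form
`ρ^*(da) : V → A`, `v ↦ ρ(v)(a)`. -/
def rhoStar (ρ : V →ₗ[A] Derivation k A A) (a : A) : V →ₗ[A] A where
  toFun v := ρ v a
  map_add' v w := by simp
  map_smul' c v := by simp

/-- The right `A`-action on `Σ_V^* = V^* × A`: `(θ,a)·a' = (a'•θ, aa')`. -/
def rActStar (_ρ : V →ₗ[A] Derivation k A A)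
    (x : (V →ₗ[A] A) × A) (a' : A) : (V →ₗ[A] A) × A :=
  (a' • x.1, x.2 * a')

/-- The (twisted) left `A`-action on `Σ_V^* = V^* × A`:
`a'·(θ,a) = (a'•θ + a•ρ^*(da'), a'a)`. -/
def lActStar (ρ : V →ₗ[A] Derivation k A A)
    (a' : A) (x : (V →ₗ[A] A) × A) : (V →ₗ[A] A) × A :=
  (a' • x.1 + x.2 • rhoStar k A ρ a', a' * x.2)

end Defs

section Aux

variable {k A : Type*} [CommRing k] [CommRing A] [Algebra k A]
variable {V : Type*} [AddCommGroup V] [Module A V]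
variable (ρ : V →ₗ[A] Derivation k A A)

@[simp] lemma rhoStar_apply (a : A) (v : V) : rhoStar k A ρ a v = ρ v a := rfl

lemma rhoStar_one : rhoStar k A ρ 1 = 0 := by
  ext v; simp

lemma rhoStar_mul (a b : A) :
    rhoStar k A ρ (a * b) = a • rhoStar k A ρ b + b • rhoStar k A ρ a := by
  ext v; simp [Derivation.leibniz, smul_eq_mul]

/-- `D : A⊗A → V^*`, `a₁⊗a₂ ↦ a₂ • ρ^*(d a₁)`. -/
def Dmap : A ⊗[k] A →ₗ[k] (V →ₗ[A] A) :=
  TensorProduct.lift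
    { toFun := fun a₁ =>
        { toFun := fun a₂ => a₂ • rhoStar k A ρ a₁
          map_add' := fun x y => add_smul x y _
          map_smul' := fun c x => smul_assoc c x _ }
      map_add' := fun a b => by
        ext a₂ v
        simp [smul_eq_mul, mul_add]
      map_smul' := fun c a => by
        ext a₂ v
        simp [smul_eq_mul, Algebra.mul_smul_comm] }

@[simp] lemma Dmap_tmul (a b : A) :
    Dmap ρ (a ⊗ₜ[k] b) = b • rhoStar k A ρ a := rfl

/-- the multiplication map as a `k`-linear map -/
def mulMap : A ⊗[k] A →ₗ[k] A := (Algebra.TensorProduct.lmul' k (S := A)).toLinearMap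

@[simp] lemma mulMap_tmul (a b : A) : mulMap (a ⊗ₜ[k] b) = a * b := by
  simp [mulMap]

lemma mem_mulIdeal_iff (x : A ⊗[k] A) : x ∈ mulIdeal k A ↔ mulMap x = 0 := Iff.rfl

lemma mulMap_mul (x y : A ⊗[k] A) : mulMap (x * y) = mulMap x * mulMap y :=
  map_mul (Algebra.TensorProduct.lmul' k (S := A)) x y

lemma Dmap_mul (x y : A ⊗[k] A) :
    Dmap ρ (x * y) = mulMap x • Dmap ρ y + mulMap y • Dmap ρ x := by
  induction x using TensorProduct.induction_on with
  | zero => simp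
  | tmul a b =>
    induction y using TensorProduct.induction_on with
    | zero => simp
    | tmul c d =>
      rw [Algebra.TensorProduct.tmul_mul_tmul]
      simp only [Dmap_tmul, mulMap_tmul, rhoStar_mul]
      ext v
      simp only [LinearMap.smul_apply, LinearMap.add_apply, smul_eq_mul, rhoStar_apply,
        mul_add]
      ring
    | add y₁ y₂ h₁ h₂ =>
      simp only [mul_add, map_add, h₁, h₂, smul_add, add_smul]; abel
  | add x₁ x₂ h₁ h₂ =>
    simp only [add_mul, map_add, h₁, h₂, smul_add, add_smul]; abel

def Tmap : A ⊗[k] A →ₗ[k] ((V →ₗ[A] A) × A) := (Dmap ρ).prod mulMap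

@[simp] lemma Tmap_apply (x : A ⊗[k] A) : Tmap ρ x = (Dmap ρ x, mulMap x) := rfl

lemma Tmap_ker {z : A ⊗[k] A} (hz : z ∈ mulIdeal k A ^ 2) : Tmap ρ z = 0 := by
  rw [pow_two] at hz
  refine Submodule.mul_induction_on hz ?_ ?_
  · intro x hx y hy
    rw [mem_mulIdeal_iff] at hx hy
    have hD : Dmap ρ (x * y) = 0 := by rw [Dmap_mul, hx, hy]; simp
    have hμ : mulMap (x * y) = 0 := by rw [mulMap_mul, hx, zero_mul]
    simp [hD, hμ, Prod.ext_iff]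
  · intro a b ha hb
    rw [map_add, ha, hb, add_zero]

/-- the induced map `A^{(1)} → Σ_V^*`. -/
def tmapFull : AOne k A →ₗ[k] ((V →ₗ[A] A) × A) :=
  (Submodule.liftQ
      (Submodule.restrictScalars k ((mulIdeal k A ^ 2 : Ideal (A ⊗[k] A)) :
        Submodule (A ⊗[k] A) (A ⊗[k] A))) (Tmap ρ)
      (fun z hz => LinearMap.mem_ker.mpr (Tmap_ker ρ ((Submodule.restrictScalars_mem k _ z).mp hz)))) ∘ₗ
    (Submodule.Quotient.restrictScalarsEquiv k ((mulIdeal k A ^ 2 : Ideal (A ⊗[k] A)) :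
        Submodule (A ⊗[k] A) (A ⊗[k] A))).symm.toLinearMap

@[simp] lemma tmapFull_mk (x : A ⊗[k] A) :
    tmapFull ρ (Ideal.Quotient.mk (mulIdeal k A ^ 2) x) = Tmap ρ x := by
  rw [← Ideal.Quotient.mk_eq_mk, tmapFull, LinearMap.comp_apply, LinearEquiv.coe_coe,
    Submodule.Quotient.restrictScalarsEquiv_symm_mk, Submodule.liftQ_apply, Tmap_apply]

end Aux

section Aux2

variable {k A : Type*} [CommRing k] [CommRing A] [Algebra k A]
variable {V : Type*} [AddCommGroup V] [Module A V]
variable (ρ : V →ₗ[A] Derivation k A A)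

lemma smul_mk_AOne (s x : A ⊗[k] A) :
    s • (Ideal.Quotient.mk (mulIdeal k A ^ 2) x : AOne k A) =
      Ideal.Quotient.mk (mulIdeal k A ^ 2) (s * x) := by
  rw [← Ideal.Quotient.mk_eq_mk, ← Ideal.Quotient.mk_eq_mk, ← Submodule.Quotient.mk_smul,
    smul_eq_mul]

lemma asmul_mk_AOne (a : A) (x : A ⊗[k] A) :
    a • (Ideal.Quotient.mk (mulIdeal k A ^ 2) x : AOne k A) =
      Ideal.Quotient.mk (mulIdeal k A ^ 2) ((a ⊗ₜ[k] (1 : A)) * x) := by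
  rw [← Ideal.Quotient.mk_eq_mk, ← Ideal.Quotient.mk_eq_mk, ← Submodule.Quotient.mk_smul]
  congr 1
  rw [Algebra.smul_def]
  congr 1

lemma exists_rep {ω : AOne k A} (hω : ω ∈ OmegaM k A) :
    ∃ x ∈ mulIdeal k A, Ideal.Quotient.mk (mulIdeal k A ^ 2) x = ω := by
  have h := (Submodule.restrictScalars_mem A _ ω).mp hω
  obtain ⟨x, hx, he⟩ := (Ideal.mem_map_iff_of_surjective _ Ideal.Quotient.mk_surjective).mp h
  exact ⟨x, hx, he⟩

/-- the map `ρ^* : Ω¹ → V^*`. -/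
def rstarMap : OmegaM k A →ₗ[A] (V →ₗ[A] A) where
  toFun ω := (tmapFull ρ (ω : AOne k A)).1
  map_add' ω₁ ω₂ := by simp
  map_smul' a ω := by
    obtain ⟨x, hxI, hxe⟩ := exists_rep (ω.2)
    show (tmapFull ρ ((a • ω : OmegaM k A) : AOne k A)).1 = a • (tmapFull ρ (ω : AOne k A)).1
    have hco : ((a • ω : OmegaM k A) : AOne k A) = a • (ω : AOne k A) := rfl
    rw [hco, ← hxe, asmul_mk_AOne, tmapFull_mk, tmapFull_mk, Tmap_apply, Tmap_apply]
    rw [mem_mulIdeal_iff] at hxI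
    simp [Dmap_mul, hxI]

lemma rstarMap_mk {x : A ⊗[k] A}
    (hx : Ideal.Quotient.mk (mulIdeal k A ^ 2) x ∈ OmegaM k A) :
    rstarMap ρ ⟨Ideal.Quotient.mk (mulIdeal k A ^ 2) x, hx⟩ = Dmap ρ x := by
  simp [rstarMap]

lemma rstar_dd (a : A) : rstarMap ρ (ddMap k A a) = rhoStar k A ρ a := by
  rw [ddMap, rstarMap_mk]
  rw [map_sub, Dmap_tmul, Dmap_tmul, rhoStar_one, one_smul, smul_zero, sub_zero]

lemma square_commutes (ω : OmegaM k A) :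
    tmapFull ρ (ω : AOne k A) = (rstarMap ρ ω, 0) := by
  obtain ⟨x, hxI, hxe⟩ := exists_rep (ω.2)
  have : ω = ⟨Ideal.Quotient.mk (mulIdeal k A ^ 2) x, hxe ▸ ω.2⟩ := by
    ext; exact hxe.symm
  rw [this, rstarMap_mk]
  rw [mem_mulIdeal_iff] at hxI
  simp [hxI]

end Aux2

/-- Let `(V,ρ)` be an anchored `A`-module.  In the category of modules over `A ⊗_k A`
(equivalently, `A`-bimodules on which `k` acts symmetrically), the commutative square
consisting of: the inclusion `Ω¹_{A/k} = I/I² → A^{(1)} = (A⊗_k A)/I²`; the `A`-linear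
map `ρ^* : Ω¹_{A/k} → V^*` determined by `d(a) ↦ (v ↦ ρ(v)(a))`; the map `V^* → Σ_V^*`,
`θ ↦ (θ, 0)`; and the map `A^{(1)} → Σ_V^*` induced by `a₁⊗a₂ ↦ (a₂•ρ^*(da₁), a₁a₂)`,
is a pushout square.  (Here `V^* ⊆ Σ_V^*` carries the symmetric bimodule structure, and
`Ω¹` and `A^{(1)}` carry their canonical bimodule structures; a bimodule map into an
`A ⊗_k A`-module `N` is an additive map intertwining the left action with `(a⊗1)•` and
the right action with `(1⊗a)•`.) -/
theorem stmt_8 (k A V : Type u) [Field k] [CharZero k] [CommRing A] [Algebra k A]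
    [AddCommGroup V] [Module A V] (ρ : V →ₗ[A] Derivation k A A) :
    ∃ (rstar : OmegaM k A →ₗ[A] (V →ₗ[A] A))
      (tmap : AOne k A →ₗ[k] ((V →ₗ[A] A) × A)),
      -- `rstar` is the A-linear map determined by `d(a) ↦ ρ^*(da)`
      (∀ a : A, rstar (ddMap k A a) = rhoStar k A ρ a) ∧
      -- `tmap` is induced by `a₁⊗a₂ ↦ (a₂•ρ^*(da₁), a₁a₂)`
      (∀ a₁ a₂ : A,
        tmap (Ideal.Quotient.mk (mulIdeal k A ^ 2) (a₁ ⊗ₜ[k] a₂)) =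
          (a₂ • rhoStar k A ρ a₁, a₁ * a₂)) ∧
      -- the square commutes
      (∀ ω : OmegaM k A, tmap (ω : AOne k A) = (rstar ω, 0)) ∧
      -- the square is a pushout of `A ⊗_k A`-modules
      (∀ (N : Type u) [AddCommGroup N] [Module (A ⊗[k] A) N]
        (f : AOne k A →ₗ[A ⊗[k] A] N) (g : (V →ₗ[A] A) →+ N),
        (∀ (a : A) (θ : V →ₗ[A] A), g (a • θ) = (a ⊗ₜ[k] (1 : A)) • g θ) →
        (∀ (a : A) (θ : V →ₗ[A] A), g (a • θ) = ((1 : A) ⊗ₜ[k] a) • g θ) →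
        (∀ ω : OmegaM k A, f (ω : AOne k A) = g (rstar ω)) →
        ∃! h : ((V →ₗ[A] A) × A) →+ N,
          (∀ (a : A) (x : (V →ₗ[A] A) × A),
            h (lActStar k A ρ a x) = (a ⊗ₜ[k] (1 : A)) • h x) ∧
          (∀ (x : (V →ₗ[A] A) × A) (a : A),
            h (rActStar k A ρ x a) = ((1 : A) ⊗ₜ[k] a) • h x) ∧
          (∀ x : AOne k A, h (tmap x) = f x) ∧
          (∀ θ : V →ₗ[A] A, h (θ, 0) = g θ)) := by
    classical
  refine ⟨rstarMap ρ, tmapFull ρ, rstar_dd ρ, ?_, square_commutes ρ, ?_⟩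
  · intro a₁ a₂
    rw [tmapFull_mk, Tmap_apply, Dmap_tmul, mulMap_tmul]
  · intro N _ _ f g hg1 hg2 hfg
    have fkey : ∀ a b : A,
        f (Ideal.Quotient.mk (mulIdeal k A ^ 2) (a ⊗ₜ[k] b)) =
          g (b • rhoStar k A ρ a) +
            f (Ideal.Quotient.mk (mulIdeal k A ^ 2) ((1 : A) ⊗ₜ[k] (a * b))) := by
      intro a b
      have hxI : a ⊗ₜ[k] b - (1 : A) ⊗ₜ[k] (a * b) ∈ mulIdeal k A := by
        rw [mem_mulIdeal_iff, map_sub, mulMap_tmul, mulMap_tmul, one_mul, sub_self]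
      have hmem : Ideal.Quotient.mk (mulIdeal k A ^ 2)
          (a ⊗ₜ[k] b - (1 : A) ⊗ₜ[k] (a * b)) ∈ OmegaM k A :=
        (Submodule.restrictScalars_mem _ _ _).2 (Ideal.mem_map_of_mem _ hxI)
      have h1 := hfg ⟨_, hmem⟩
      rw [rstarMap_mk] at h1
      have hD : Dmap ρ (a ⊗ₜ[k] b - (1 : A) ⊗ₜ[k] (a * b)) = b • rhoStar k A ρ a := by
        rw [map_sub, Dmap_tmul, Dmap_tmul, rhoStar_one, smul_zero, sub_zero]
      rw [hD] at h1
      have h2 : f (Ideal.Quotient.mk (mulIdeal k A ^ 2) (a ⊗ₜ[k] b)) -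
          f (Ideal.Quotient.mk (mulIdeal k A ^ 2) ((1 : A) ⊗ₜ[k] (a * b))) =
          g (b • rhoStar k A ρ a) := by
        rw [← map_sub, ← map_sub]
        exact h1
      rw [← h2]
      abel
    let h : ((V →ₗ[A] A) × A) →+ N :=
      { toFun := fun x => g x.1 + f (Ideal.Quotient.mk (mulIdeal k A ^ 2) ((1 : A) ⊗ₜ[k] x.2))
        map_zero' := by simp
        map_add' := fun x y => by
          simp only [Prod.fst_add, Prod.snd_add, map_add, TensorProduct.tmul_add]
          abel }
    have happly : ∀ x : (V →ₗ[A] A) × A,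
        h x = g x.1 + f (Ideal.Quotient.mk (mulIdeal k A ^ 2) ((1 : A) ⊗ₜ[k] x.2)) :=
      fun _ => rfl
    have hmk : ∀ z : A ⊗[k] A,
        h (tmapFull ρ (Ideal.Quotient.mk (mulIdeal k A ^ 2) z)) =
          f (Ideal.Quotient.mk (mulIdeal k A ^ 2) z) := by
      intro z
      induction z using TensorProduct.induction_on with
      | zero => simp
      | tmul a b =>
        rw [tmapFull_mk, Tmap_apply, Dmap_tmul, mulMap_tmul, happly]
        exact (fkey a b).symm
      | add z₁ z₂ h₁ h₂ =>
        rw [map_add, map_add, map_add, h₁, h₂]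
        exact (map_add f _ _).symm
    have hcompat : ∀ x : AOne k A, h (tmapFull ρ x) = f x := by
      intro x
      obtain ⟨z, rfl⟩ := Ideal.Quotient.mk_surjective x
      exact hmk z
    have hθcond : ∀ θ : V →ₗ[A] A, h (θ, 0) = g θ := by
      intro θ
      rw [happly]
      simp
    refine ⟨h, ⟨?_, ?_, hcompat, hθcond⟩, ?_⟩
    · intro a x
      rw [happly, happly, lActStar]
      rw [map_add g, hg1 a x.1, smul_add, ← map_smul f, smul_mk_AOne,
        Algebra.TensorProduct.tmul_mul_tmul, mul_one, one_mul, fkey a x.2]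
      abel
    · intro x a
      rw [happly, happly, rActStar]
      rw [hg2 a x.1, smul_add, ← map_smul f, smul_mk_AOne,
        Algebra.TensorProduct.tmul_mul_tmul, one_mul, mul_comm x.2 a]
    · intro h' hh'
      obtain ⟨hl', hr', ht', hθ'⟩ := hh'
      refine AddMonoidHom.ext fun x => ?_
      obtain ⟨θ, a⟩ := x
      have hsplit : ((θ, a) : (V →ₗ[A] A) × A) = (θ, 0) + (0, a) := by
        simp
      have h0a : ((0 : V →ₗ[A] A), a) =
          tmapFull ρ (Ideal.Quotient.mk (mulIdeal k A ^ 2) ((1 : A) ⊗ₜ[k] a)) := by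
        rw [tmapFull_mk, Tmap_apply, Dmap_tmul, mulMap_tmul, rhoStar_one, smul_zero, one_mul]
      have e1 : h' (θ, a) = g θ + f (Ideal.Quotient.mk (mulIdeal k A ^ 2) ((1 : A) ⊗ₜ[k] a)) := by
        rw [hsplit, map_add, hθ' θ, h0a, ht']
      have e2 : h (θ, a) = g θ + f (Ideal.Quotient.mk (mulIdeal k A ^ 2) ((1 : A) ⊗ₜ[k] a)) :=
        happly _
      rw [e1, e2]
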